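/- arXiv:2212.08713 — 5 statements merged into one kernel-verified Lean document; each statement's English description precedes it below -/
import Mathlib

section
/- Let q be a prime power, n a positive integer, u ∈ F_{q^n} nonzero, and k an integer with 1 ≤ k and 2k < n. Suppose f : F_{q^n} → F_{q^n} is of the form f(x) = Σ_{i=1}^{k} p_i x^{q^i} with p_1, …, p_k ∈ F_{q^n} (an F_{q^n}-linear combination of the Frobenius powers x ↦ x^{q^i} for 1 ≤ i ≤ k), and that f is self-adjoint with respect to ⟨·,·⟩_u, i.e. Tr(u x f(y)) = Tr(u f(x) y) for all x, y ∈ F_{q^n}. Then f = 0. -/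
/-!
Let `σ` be the `q`-Frobenius, a generator of `Gal(F_{q^n}/F_q)` of order `n`, so that
`f = ∑ pᵢ σⁱ`. As the trace is `σ`-invariant, the adjoint of `y ↦ c σⁱ(y)` for the trace form is
`x ↦ σ⁻ⁱ(c x)`, and nondegeneracy of the trace form turns self-adjointness of `f` for `⟨·,·⟩_u`
into the identity `u f(x) = ∑ σ⁻ⁱ(u pᵢ) σ⁻ⁱ(x)`. For `1 ≤ i, j ≤ k` and `2k < n` the
automorphisms `σⁱ` and `σ⁻ʲ` are pairwise distinct, so Dedekind's independence of characters
forces `u pᵢ = 0`.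
-/

/-- The trace map of `F_{q^n}/F_q`, written explicitly as
`Tr(x) = x + x^q + ⋯ + x^{q^{n-1}}` (valued in the big field). -/
def qTr {K : Type*} [CommRing K] (q n : ℕ) (x : K) : K :=
  ∑ i ∈ Finset.range n, x ^ q ^ i

open Finset

theorem LinearIndependent.eq_zero_of_sum_smul_eq_sum_smul {ι α β R M : Type*} [Ring R]
    [AddCommGroup M] [Module R M] {v : ι → M} (hv : LinearIndependent R v) {s : Finset α}
    {t : Finset β} {e : α → ι} {e' : β → ι} (he : Set.InjOn e s)
    (hst : ∀ a ∈ s, ∀ b ∈ t, e a ≠ e' b) {c : α → R} {d : β → R}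
    (h : ∑ a ∈ s, c a • v (e a) = ∑ b ∈ t, d b • v (e' b)) :
    ∀ a ∈ s, c a = 0 := by
  have hdisj : Disjoint (Submodule.span R (v '' (e '' s))) (Submodule.span R (v '' (e' '' t))) :=
    hv.disjoint_span_image <| Set.disjoint_left.2 <| by
      rintro _ ⟨a, ha, rfl⟩ ⟨b, hb, hab⟩
      exact hst a ha b hb hab.symm
  have hzero : ∑ a ∈ s, c a • v (e a) = 0 := by
    refine Submodule.disjoint_def.1 hdisj _ ?_ ?_
    · exact Submodule.sum_mem _ fun a ha =>
        Submodule.smul_mem _ _ (Submodule.subset_span ⟨e a, ⟨a, ha, rfl⟩, rfl⟩)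
    · rw [h]
      exact Submodule.sum_mem _ fun b hb =>
        Submodule.smul_mem _ _ (Submodule.subset_span ⟨e' b, ⟨b, hb, rfl⟩, rfl⟩)
  exact linearIndepOn_iff'.1 ((hv.linearIndepOn _).comp_of_image he) s c subset_rfl hzero

theorem AlgEquiv.linearIndependent_coeFn (R L : Type*) [CommRing R] [CommRing L] [IsDomain L]
    [Algebra R L] : LinearIndependent L (fun τ : L ≃ₐ[R] L => (τ : L → L)) :=
  (linearIndependent_monoidHom L L).comp (fun τ : L ≃ₐ[R] L => (τ : L →* L))
    fun _ _ h => AlgEquiv.ext fun x => DFunLike.congr_fun h x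

namespace Algebra

theorem trace_mul_algEquiv_apply {R S : Type*} [CommRing R] [CommRing S] [Algebra R S]
    (τ : S ≃ₐ[R] S) (x y : S) : trace R S (x * τ y) = trace R S (τ.symm x * y) := by
  rw [← trace_eq_of_algEquiv τ (τ.symm x * y), map_mul τ, τ.apply_symm_apply]

theorem eq_of_forall_trace_mul_eq (K : Type*) {L : Type*} [Field K] [Field L] [Algebra K L]
    [FiniteDimensional K L] [Algebra.IsSeparable K L] {a b : L}
    (h : ∀ y, trace K L (a * y) = trace K L (b * y)) : a = b :=
  sub_eq_zero.1 <| (traceForm_nondegenerate K L).1 _ fun y => by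
    simp [h y]

end Algebra

section SelfAdjoint

variable (K : Type*) {L ι : Type*} [Field K] [Field L] [Algebra K L]

def IsTraceSelfAdjoint (u : L) (f : L → L) : Prop :=
  ∀ x y, Algebra.trace K L (u * x * f y) = Algebra.trace K L (u * f x * y)

variable {K} [FiniteDimensional K L] [Algebra.IsSeparable K L] {u : L} {s : Finset ι} {p : ι → L}
  {τ : ι → L ≃ₐ[K] L}

theorem IsTraceSelfAdjoint.mul_sum_eq (hf : IsTraceSelfAdjoint K u fun y => ∑ i ∈ s, p i * τ i y)
    (x : L) : u * ∑ i ∈ s, p i * τ i x = ∑ i ∈ s, (τ i).symm (u * p i) * (τ i).symm x := by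
  refine Algebra.eq_of_forall_trace_mul_eq K fun y => ?_
  rw [← hf x y, mul_sum, sum_mul, map_sum, map_sum]
  refine sum_congr rfl fun i _ => ?_
  rw [← map_mul, ← Algebra.trace_mul_algEquiv_apply]
  ring_nf

theorem IsTraceSelfAdjoint.coeff_eq_zero (hu : u ≠ 0) (hτ : Set.InjOn τ s)
    (hτ_inv : ∀ i ∈ s, ∀ j ∈ s, τ i ≠ (τ j).symm)
    (hf : IsTraceSelfAdjoint K u fun y => ∑ i ∈ s, p i * τ i y) : ∀ i ∈ s, p i = 0 := by
  have hfun : ∑ i ∈ s, (u * p i) • ⇑(τ i) = ∑ i ∈ s, (τ i).symm (u * p i) • ⇑(τ i).symm := by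
    ext x
    simpa [Finset.sum_apply, mul_sum, mul_assoc] using hf.mul_sum_eq x
  intro i hi
  exact (mul_eq_zero.1 <| (AlgEquiv.linearIndependent_coeFn K L).eq_zero_of_sum_smul_eq_sum_smul
    hτ hτ_inv hfun i hi).resolve_left hu

end SelfAdjoint

theorem pow_ne_inv_pow_of_add_lt_orderOf {G : Type*} [Group G] {x : G} {i j : ℕ}
    (hij : i + j ≠ 0) (h : i + j < orderOf x) : x ^ i ≠ (x ^ j)⁻¹ := by
  rw [ne_eq, eq_inv_iff_mul_eq_one, ← pow_add]
  exact pow_ne_one_of_lt_orderOf hij h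

namespace FiniteField

variable {F K : Type*} [Field F] [Fintype F] [Field K] [Fintype K] [Algebra F K]

theorem qTr_eq_algebraMap_trace (x : K) :
    qTr (Fintype.card F) (Module.finrank F K) x = algebraMap F K (Algebra.trace F K x) := by
  rw [algebraMap_trace_eq_sum_pow, Nat.card_eq_fintype_card, qTr]

theorem frobeniusAlgEquivOfAlgebraic_pow_apply (i : ℕ) (x : K) :
    (frobeniusAlgEquivOfAlgebraic F K ^ i) x = x ^ Fintype.card F ^ i := by
  rw [AlgEquiv.coe_pow, coe_frobeniusAlgEquivOfAlgebraic_iterate]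

end FiniteField

theorem selfadjoint_low_degree_qpoly_eq_zero_general
    {F K : Type*} [Field F] [Fintype F] [Field K] [Fintype K] [Algebra F K]
    {n k : ℕ} (hn : Module.finrank F K = n)
    (hkn : 2 * k < n)
    (u : K) (hu : u ≠ 0) (p : ℕ → K) (f : K → K)
    (hf : ∀ x, f x = ∑ i ∈ Finset.Icc 1 k, p i * x ^ Fintype.card F ^ i)
    (hsa : ∀ x y : K,
      qTr (Fintype.card F) n (u * x * f y) = qTr (Fintype.card F) n (u * f x * y)) :
    ∀ x, f x = 0 := by
  subst hn
  rw [← FiniteField.orderOf_frobeniusAlgEquivOfAlgebraic F K] at hkn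
  set σ := FiniteField.frobeniusAlgEquivOfAlgebraic F K
  have hf_σ : f = fun y => ∑ i ∈ Icc 1 k, p i * (σ ^ i) y := by
    ext y
    simp only [hf, σ, FiniteField.frobeniusAlgEquivOfAlgebraic_pow_apply]
  have hsa_trace : IsTraceSelfAdjoint F u f := fun x y =>
    (algebraMap F K).injective (by simpa only [FiniteField.qTr_eq_algebraMap_trace] using hsa x y)
  have hp : ∀ i ∈ Icc 1 k, p i = 0 := by
    refine (hf_σ ▸ hsa_trace).coeff_eq_zero hu (pow_injOn_Iio_orderOf.mono fun i hi => ?_)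
      fun i hi j hj => pow_ne_inv_pow_of_add_lt_orderOf ?_ ?_
    all_goals simp only [coe_Icc, Set.mem_Icc, Set.mem_Iio, mem_Icc] at *; omega
  intro x
  rw [hf]
  exact sum_eq_zero fun i hi => by rw [hp i hi, zero_mul]

/-- For `1 ≤ k` and `2k < n`, any `F_{q^n}`-linear combination
`f(x) = ∑_{i=1}^{k} p_i x^{q^i}` of the Frobenius powers `x ↦ x^{q^i}`, `1 ≤ i ≤ k`,
which is self-adjoint with respect to `⟨x,y⟩_u = Tr(uxy)` (`u ≠ 0`), is zero. -/
theorem selfadjoint_low_degree_qpoly_eq_zero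
    {F K : Type*} [Field F] [Fintype F] [Field K] [Fintype K] [Algebra F K]
    {n k : ℕ} (hn : Module.finrank F K = n)
    (hk : 1 ≤ k) (hkn : 2 * k < n)
    (u : K) (hu : u ≠ 0) (p : ℕ → K) (f : K → K)
    (hf : ∀ x, f x = ∑ i ∈ Finset.Icc 1 k, p i * x ^ Fintype.card F ^ i)
    (hsa : ∀ x y : K,
      qTr (Fintype.card F) n (u * x * f y) = qTr (Fintype.card F) n (u * f x * y)) :
    ∀ x, f x = 0 :=
  selfadjoint_low_degree_qpoly_eq_zero_general hn hkn u hu p f hf hsa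
end

section
/- Suppose q is an odd prime power and n is an even positive integer. Let u ∈ F_{q^n} be nonzero such that N(u) is not a square in F_q^×, where N is the norm of F_{q^n}/F_q. Then the bilinear form ⟨x,y⟩_u = Tr(u x y) on F_{q^n} admits an orthonormal basis: there exists an F_q-basis x_1, …, x_n of F_{q^n} with Tr(u x_i x_j) = δ_{ij} (Kronecker delta) for all 1 ≤ i, j ≤ n. -/
open Module Matrix Submodule

lemma ne_zero_of_not_isSquare {M₀ : Type*} [MulZeroClass M₀] {a : M₀} (ha : ¬IsSquare a) :
    a ≠ 0 := by
  rintro rfl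
  exact ha .zero

namespace FiniteField

variable {F : Type*} [Field F] [Fintype F]

lemma exists_mul_sq_add_mul_sq_eq_one (hF : ringChar F ≠ 2) {a b : F} (ha : a ≠ 0)
    (hb : b ≠ 0) : ∃ x y : F, a * x ^ 2 + b * y ^ 2 = 1 := by
  open Polynomial in
  obtain ⟨x, y, h⟩ := exists_root_sum_quadratic (f := C a * X ^ 2 - 1) (g := C b * X ^ 2)
    (by rw [degree_sub_eq_left_of_degree_lt] <;> simp [degree_C_mul_X_pow 2 ha])
    (degree_C_mul_X_pow 2 hb) (odd_card_of_char_ne_two hF)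
  simp only [Polynomial.eval_sub, Polynomial.eval_mul, Polynomial.eval_pow, Polynomial.eval_C,
    Polynomial.eval_X, Polynomial.eval_one] at h
  exact ⟨x, y, by linear_combination h⟩

lemma isSquare_mul_of_not_isSquare {a b : F} (ha : ¬IsSquare a) (hb : ¬IsSquare b) :
    IsSquare (a * b) := by
  classical
  rw [← quadraticChar_one_iff_isSquare (mul_ne_zero (ne_zero_of_not_isSquare ha)
    (ne_zero_of_not_isSquare hb)), map_mul,
    quadraticChar_neg_one_iff_not_isSquare.mpr ha, quadraticChar_neg_one_iff_not_isSquare.mpr hb]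
  norm_num

end FiniteField

namespace LinearMap.BilinForm

variable {F V ι : Type*} [Field F] [AddCommGroup V] [Module F V] [Fintype ι]
  {B : LinearMap.BilinForm F V}

lemma isOrthoᵢ_cons {m : ℕ} {x : V} {v : Fin m → V} :
    B.IsOrthoᵢ (Fin.cons x v : Fin (m + 1) → V) ↔
      B.IsOrthoᵢ v ∧ ∀ i, B x (v i) = 0 ∧ B (v i) x = 0 := by
  simp only [isOrthoᵢ_def, Fin.forall_fin_succ, Fin.cons_zero, Fin.cons_succ, ne_eq,
    not_true_eq_false, IsEmpty.forall_iff, Fin.succ_ne_zero, not_false_eq_true,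
    forall_const, Fin.succ_inj, true_and, (Fin.succ_ne_zero _).symm]
  grind

lemma apply_eq_zero_of_mem_span_left {s : Set V} {x y : V} (hx : x ∈ span F s)
    (h : ∀ z ∈ s, B z y = 0) : B x y = 0 :=
  (span_le (p := LinearMap.ker (B.flip y))).mpr h hx

lemma apply_eq_zero_of_mem_span_right {s : Set V} {x y : V} (hy : y ∈ span F s)
    (h : ∀ z ∈ s, B x z = 0) : B x y = 0 :=
  (span_le (p := LinearMap.ker (B x))).mpr h hy

lemma det_toMatrix_of_isOrthoᵢ [DecidableEq ι] {b : Basis ι F V} (hb : B.IsOrthoᵢ b) :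
    (toMatrix b B).det = ∏ i, B (b i) (b i) := by
  rw [← det_diagonal]
  congr 1
  ext i j
  rw [toMatrix_apply, diagonal_apply]
  split_ifs with h
  · rw [h]
  · exact hb h

variable [Fintype F]

lemma exists_orthogonal_pair_apply_self_eq_one (hF : ringChar F ≠ 2) {e f : V}
    (hef : B e f = 0) (hfe : B f e = 0) (he : B e e ≠ 0) (hf : B f f ≠ 0) :
    ∃ e' ∈ span F {e, f}, ∃ f' ∈ span F {e, f},
      B e' e' = 1 ∧ B f' f' = B e e * B f f ∧ B e' f' = 0 ∧ B f' e' = 0 := by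
  obtain ⟨x, y, hxy⟩ := FiniteField.exists_mul_sq_add_mul_sq_eq_one hF he hf
  have he_mem : e ∈ span F {e, f} := subset_span (by simp)
  have hf_mem : f ∈ span F {e, f} := subset_span (by simp)
  refine ⟨x • e + y • f, add_mem (smul_mem _ _ he_mem) (smul_mem _ _ hf_mem),
    (B f f * y) • e - (B e e * x) • f, sub_mem (smul_mem _ _ he_mem) (smul_mem _ _ hf_mem),
    ?_, ?_, ?_, ?_⟩ <;>
  simp only [map_add, map_sub, map_smul, LinearMap.add_apply, LinearMap.sub_apply,
    LinearMap.smul_apply, smul_eq_mul, hef, hfe]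
  · linear_combination hxy
  · linear_combination B e e * B f f * hxy
  · ring
  · ring

theorem exists_orthonormal_of_isOrthoᵢ (hF : ringChar F ≠ 2) :
    ∀ {m : ℕ} (b : Fin m → V), B.IsOrthoᵢ b → (∀ i, B (b i) (b i) ≠ 0) →
      IsSquare (∏ i, B (b i) (b i)) →
      ∃ c : Fin m → V, B.IsOrthoᵢ c ∧ (∀ i, B (c i) (c i) = 1) ∧ ∀ i, c i ∈ span F (Set.range b)
  | 0, b, _, _, _ => ⟨b, fun i => i.elim0, fun i => i.elim0, fun i => i.elim0⟩
  | 1, b, _, hb, ⟨s, hs⟩ => by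
    have hs0 : s ≠ 0 := by rintro rfl; simp_all
    refine ⟨fun i => s⁻¹ • b i, fun i j hij => (hij (Subsingleton.elim i j)).elim, fun i => ?_,
      fun i => smul_mem _ _ (subset_span (Set.mem_range_self i))⟩
    rw [Subsingleton.elim i 0]
    simp only [map_smul, LinearMap.smul_apply, smul_eq_mul, Fin.prod_univ_one] at hs ⊢
    rw [hs]
    field_simp
  | m + 2, b, ho, hb, hsq => by
    -- Trade `b 0, b 1` for `e, f` with `B e e = 1`, then recurse on `f` and the remaining `b k`.
    obtain ⟨e, he_mem, f, hf_mem, hee, hff, hef, hfe⟩ :=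
      exists_orthogonal_pair_apply_self_eq_one hF (ho zero_ne_one) (ho one_ne_zero) (hb 0) (hb 1)
    set rest : Fin m → V := fun k => b k.succ.succ
    have hpair_rest : ∀ z ∈ span F {b 0, b 1}, ∀ k, B z (rest k) = 0 ∧ B (rest k) z = 0 := by
      intro z hz k
      have hne : ∀ w ∈ ({b 0, b 1} : Set V), B w (rest k) = 0 ∧ B (rest k) w = 0 := by
        rintro _ (rfl | rfl)
        · exact ⟨ho (Fin.succ_ne_zero _).symm, ho (Fin.succ_ne_zero _)⟩
        · exact ⟨ho (by simp [Fin.ext_iff]), ho (by simp [Fin.ext_iff])⟩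
      exact ⟨apply_eq_zero_of_mem_span_left hz fun w hw => (hne w hw).1,
        apply_eq_zero_of_mem_span_right hz fun w hw => (hne w hw).2⟩
    have hpair_le : span F {b 0, b 1} ≤ span F (Set.range b) :=
      span_mono (Set.pair_subset ⟨0, rfl⟩ ⟨1, rfl⟩)
    obtain ⟨c, hco, hc1, hcspan⟩ := exists_orthonormal_of_isOrthoᵢ hF (Fin.cons f rest)
      (isOrthoᵢ_cons.mpr ⟨fun i j hij => ho (by simpa using hij), hpair_rest f hf_mem⟩)
      (Fin.cons (by rw [Fin.cons_zero, hff]; exact mul_ne_zero (hb 0) (hb 1))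
        fun k => by simpa using hb k.succ.succ)
      (by
        rw [Fin.prod_univ_succ, Fin.prod_univ_succ] at hsq
        rw [Fin.prod_univ_succ, Fin.cons_zero, hff, mul_assoc]
        simpa only [Fin.cons_succ, Fin.succ_zero_eq_one] using hsq)
    have he_orth : ∀ z ∈ Set.range (Fin.cons f rest : Fin (m + 1) → V), B e z = 0 ∧ B z e = 0 := by
      rintro _ ⟨k, rfl⟩
      cases k using Fin.cases with
      | zero => exact ⟨hef, hfe⟩
      | succ k => simpa using hpair_rest e he_mem k
    have hspan : span F (Set.range (Fin.cons f rest : Fin (m + 1) → V)) ≤ span F (Set.range b) := by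
      refine span_le.mpr ?_
      rintro _ ⟨k, rfl⟩
      cases k using Fin.cases with
      | zero => exact hpair_le hf_mem
      | succ k => exact subset_span ⟨_, rfl⟩
    refine ⟨Fin.cons e c, isOrthoᵢ_cons.mpr ⟨hco, fun i => ⟨?_, ?_⟩⟩, Fin.cases hee hc1,
      Fin.cases (hpair_le he_mem) fun i => hspan (hcspan i)⟩
    · exact apply_eq_zero_of_mem_span_right (hcspan i) fun z hz => (he_orth z hz).1
    · exact apply_eq_zero_of_mem_span_left (hcspan i) fun z hz => (he_orth z hz).2

theorem exists_orthonormal_basis [FiniteDimensional F V] (hF : ringChar F ≠ 2) (hBs : B.IsSymm)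
    (hB : B.Nondegenerate) (b : Basis (Fin (finrank F V)) F V)
    (hsq : IsSquare (toMatrix b B).det) :
    ∃ c : Basis (Fin (finrank F V)) F V, ∀ i j, B (c i) (c j) = if i = j then 1 else 0 := by
  have : Invertible (2 : F) := invertibleOfNonzero (Ring.two_ne_zero hF)
  obtain ⟨o, ho⟩ := exists_orthogonal_basis (isSymm_iff.mp hBs)
  have hsq' : IsSquare (∏ i, B (o i) (o i)) := by
    obtain ⟨s, hs⟩ := hsq
    rw [← det_toMatrix_of_isOrthoᵢ ho, ← toMatrix_mul_basis_toMatrix b, det_mul, det_mul,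
      det_transpose, hs]
    exact ⟨(b.toMatrix o).det * s, by ring⟩
  obtain ⟨c, hco, hc1, -⟩ := exists_orthonormal_of_isOrthoᵢ hF o ho
    (iIsOrtho.not_isOrtho_basis_self_of_nondegenerate ho hB) hsq'
  have hc : LinearIndependent F c :=
    LinearMap.linearIndependent_of_isOrthoᵢ hco fun i => by rw [hc1]; exact one_ne_zero
  refine ⟨basisOfLinearIndependentOfCardEqFinrank' c hc (by simp), fun i j => ?_⟩
  rw [coe_basisOfLinearIndependentOfCardEqFinrank']
  split_ifs with h
  · rw [h, hc1]
  · exact hco h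

end LinearMap.BilinForm

namespace FiniteField

variable (F : Type*) {K : Type*} [Field F] [Fintype F] [Field K] [Algebra F K]

def mooreMatrix {n : ℕ} (b : Fin n → K) : Matrix (Fin n) (Fin n) K :=
  Matrix.of fun k i => b i ^ Fintype.card F ^ (k : ℕ)

variable [Finite K] {n : ℕ}

lemma traceMatrix_map_eq_mooreMatrix (hn : finrank F K = n) (b : Fin n → K) :
    (Algebra.traceMatrix F b).map (algebraMap F K) = (mooreMatrix F b)ᵀ * mooreMatrix F b := by
  ext i j
  simp [Algebra.traceMatrix_apply, algebraMap_trace_eq_sum_pow, hn, Matrix.mul_apply, mooreMatrix,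
    mul_pow,
    Fin.sum_univ_eq_sum_range (fun k => b i ^ Fintype.card F ^ k * b j ^ Fintype.card F ^ k)]

lemma mooreMatrix_map_frobenius (hn : finrank F K = n) (b : Fin n → K) :
    (mooreMatrix F b).map (frobeniusAlgEquivOfAlgebraic F K) =
      (mooreMatrix F b).submatrix (finRotate n) id := by
  have := Fintype.ofFinite K
  cases n with
  | zero => exact Subsingleton.elim _ _
  | succ n =>
    ext k i
    simp only [Matrix.map_apply, Matrix.submatrix_apply, id_eq, mooreMatrix, Matrix.of_apply,
      coe_frobeniusAlgEquivOfAlgebraic, coe_finRotate, ← pow_mul, ← pow_succ]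
    split_ifs with hk
    · rw [hk, Fin.val_last, ← hn, ← card_eq_pow_finrank, pow_card, pow_zero, pow_one]
    · rfl

lemma det_mooreMatrix_pow_card (hn : finrank F K = n) (b : Fin n → K) :
    (mooreMatrix F b).det ^ Fintype.card F = (-1) ^ (n - 1) * (mooreMatrix F b).det := by
  calc (mooreMatrix F b).det ^ Fintype.card F
      = frobeniusAlgEquivOfAlgebraic F K (mooreMatrix F b).det := by
        rw [coe_frobeniusAlgEquivOfAlgebraic]
    _ = ((mooreMatrix F b).map (frobeniusAlgEquivOfAlgebraic F K)).det :=
        RingHom.map_det (frobeniusAlgEquivOfAlgebraic F K : K →+* K) _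
    _ = (-1) ^ (n - 1) * (mooreMatrix F b).det := by
        rw [mooreMatrix_map_frobenius F hn, Matrix.det_permute, sign_finRotate]
        simp

theorem not_isSquare_discr (hF : ringChar F ≠ 2) (hn : Even n) (b : Basis (Fin n) F K) :
    ¬IsSquare (Algebra.discr F b) := by
  have hrank : finrank F K = n := by simp [finrank_eq_card_basis b]
  have hn0 : n ≠ 0 := hrank ▸ finrank_pos.ne'
  have hpow := det_mooreMatrix_pow_card F hrank b
  set σ := frobeniusAlgEquivOfAlgebraic F K
  set w := (mooreMatrix F b).det
  have hdiscr : algebraMap F K (Algebra.discr F b) = w * w := by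
    rw [Algebra.discr_def, RingHom.map_det, RingHom.mapMatrix_apply,
      traceMatrix_map_eq_mooreMatrix F hrank, det_mul, det_transpose]
  have hw0 : w ≠ 0 := by
    intro hw
    rw [hw, mul_zero, map_eq_zero_iff _ (algebraMap F K).injective] at hdiscr
    exact Algebra.discr_not_zero_of_basis F b hdiscr
  have hσw : σ w = -w := by
    rw [coe_frobeniusAlgEquivOfAlgebraic]
    dsimp only
    rw [hpow,
      (Nat.Even.sub_odd (Nat.one_le_iff_ne_zero.mpr hn0) hn odd_one).neg_one_pow, neg_one_mul]
  rintro ⟨t, ht⟩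
  have hσfix : σ w = w := by
    rw [ht, map_mul] at hdiscr
    rcases mul_self_eq_mul_self_iff.mp hdiscr.symm with h | h <;> rw [h] <;> simp
  have h2 : (2 : K) ≠ 0 := Ring.two_ne_zero (Algebra.ringChar_eq F K ▸ hF)
  have h2w : (2 : K) * w = 0 := by linear_combination hσw - hσfix
  exact hw0 ((mul_eq_zero.mp h2w).resolve_left h2)

end FiniteField

namespace Algebra

variable (R S : Type*) [CommRing R] [CommRing S] [Algebra R S]

noncomputable def twistedTraceForm (u : S) : LinearMap.BilinForm R S :=
  (traceForm R S).compLeft (lmul R S u)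

variable {R S}

@[simp]
lemma twistedTraceForm_apply (u x y : S) :
    twistedTraceForm R S u x y = trace R S (u * x * y) :=
  rfl

lemma twistedTraceForm_isSymm (u : S) : (twistedTraceForm R S u).IsSymm :=
  LinearMap.BilinForm.isSymm_def.mpr fun x y => by
    simp only [twistedTraceForm_apply, mul_right_comm]

lemma det_toMatrix_twistedTraceForm {ι : Type*} [Fintype ι] [DecidableEq ι] (b : Basis ι R S)
    (u : S) :
    (LinearMap.BilinForm.toMatrix b (twistedTraceForm R S u)).det = norm R u * discr R b := by
  rw [twistedTraceForm, LinearMap.BilinForm.toMatrix_compLeft, det_mul, det_transpose,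
    LinearMap.det_toMatrix, ← norm_apply, ← traceMatrix_of_basis, ← discr_def]

end Algebra

lemma qTr_eq_algebraMap_trace {F K : Type*} [Field F] [Fintype F] [Field K] [Finite K]
    [Algebra F K] (x : K) :
    qTr (Fintype.card F) (finrank F K) x = algebraMap F K (Algebra.trace F K x) := by
  rw [FiniteField.algebraMap_trace_eq_sum_pow, Nat.card_eq_fintype_card, qTr]

theorem exists_orthonormal_basis_of_norm_nonsquare_general
    {F K : Type*} [Field F] [Fintype F] [Field K] [Fintype K] [Algebra F K]
    {n : ℕ} (hq : Odd (Fintype.card F)) (hn : Module.finrank F K = n)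
    (hne : Even n)
    (u : K)
    (v : F) (hv : algebraMap F K v = ∏ i ∈ Finset.range n, u ^ Fintype.card F ^ i)
    (hvns : ¬ IsSquare v) :
    ∃ b : Module.Basis (Fin n) F K, ∀ i j : Fin n,
      qTr (Fintype.card F) n (u * b i * b j) = if i = j then 1 else 0 := by
  subst hn
  have hF : ringChar F ≠ 2 := by
    rw [Ne, FiniteField.even_card_iff_char_two, Nat.odd_iff.mp hq]
    decide
  have hnorm : Algebra.norm F u = v := by
    apply (algebraMap F K).injective
    rw [hv, FiniteField.algebraMap_norm_eq_prod_pow, Nat.card_eq_fintype_card]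
  let b := Module.finBasis F K
  have hdet := Algebra.det_toMatrix_twistedTraceForm b u
  have hdiscr := FiniteField.not_isSquare_discr F hF hne b
  obtain ⟨c, hc⟩ := (Algebra.twistedTraceForm F K u).exists_orthonormal_basis hF
    (Algebra.twistedTraceForm_isSymm u)
    ((LinearMap.BilinForm.nondegenerate_iff_det_ne_zero b).mpr <| by
      rw [hdet, hnorm]
      exact mul_ne_zero (ne_zero_of_not_isSquare hvns) (ne_zero_of_not_isSquare hdiscr))
    b (by rw [hdet, hnorm]; exact FiniteField.isSquare_mul_of_not_isSquare hvns hdiscr)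
  refine ⟨c, fun i j => ?_⟩
  rw [qTr_eq_algebraMap_trace, ← Algebra.twistedTraceForm_apply, hc, apply_ite (algebraMap F K),
    map_one, map_zero]

/-- For `q` odd, `n` even and `u ∈ F_{q^n}` nonzero whose norm
`N(u) = ∏_{i<n} u^{q^i}` is a non-square of `F_q`, the bilinear form
`⟨x,y⟩_u = Tr(uxy)` admits an orthonormal basis. -/
theorem exists_orthonormal_basis_of_norm_nonsquare
    {F K : Type*} [Field F] [Fintype F] [Field K] [Fintype K] [Algebra F K]
    {n : ℕ} (hq : Odd (Fintype.card F)) (hn : Module.finrank F K = n)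
    (hne : Even n) (hn0 : 0 < n)
    (u : K) (hu : u ≠ 0)
    (v : F) (hv : algebraMap F K v = ∏ i ∈ Finset.range n, u ^ Fintype.card F ^ i)
    (hvns : ¬ IsSquare v) :
    ∃ b : Module.Basis (Fin n) F K, ∀ i j : Fin n,
      qTr (Fintype.card F) n (u * b i * b j) = if i = j then 1 else 0 :=
  exists_orthonormal_basis_of_norm_nonsquare_general hq hn hne u v hv hvns
end

section
/- Let q be a prime power, n a positive integer, u ∈ F_{q^n}, and a = (a_1, …, a_n) ∈ F_{q^n}^n. Then det((Tr(u a_i a_j))_{1 ≤ i,j ≤ n}) = N(u) · det(M(a))², where M(a) is the Moore matrix of a and N is the norm of F_{q^n}/F_q, the equality holding in F_{q^n}. -/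
/-- The determinant of the Gram-type matrix `(Tr(u aᵢ aⱼ))_{i,j}`
equals `N(u) · det(M(a))²`, where `M(a)` is the Moore matrix of `a` and
`N(u) = u · u^q ⋯ u^{q^{n-1}}` is the norm. -/
theorem det_gram_eq_norm_mul_det_moore_sq
    {F K : Type*} [Field F] [Fintype F] [Field K] [Fintype K] [Algebra F K]
    {n : ℕ} (hn0 : 0 < n) (hn : Module.finrank F K = n)
    (u : K) (a : Fin n → K) :
    (Matrix.of fun i j : Fin n => qTr (Fintype.card F) n (u * a i * a j)).det
      = (∏ i ∈ Finset.range n, u ^ Fintype.card F ^ i)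
        * (Matrix.of fun i j : Fin n => a j ^ Fintype.card F ^ (i : ℕ)).det ^ 2 := by
  set q := Fintype.card F with hq
  set M : Matrix (Fin n) (Fin n) K := Matrix.of fun i j : Fin n => a j ^ q ^ (i : ℕ) with hM
  have key : (Matrix.of fun i j : Fin n => qTr q n (u * a i * a j))
      = M.transpose * (Matrix.diagonal (fun k : Fin n => u ^ q ^ (k : ℕ)) * M) := by
    ext i j
    simp only [qTr, Matrix.mul_apply, Matrix.transpose_apply, Matrix.diagonal_mul,
      Matrix.of_apply, hM]
    rw [← Fin.sum_univ_eq_sum_range (fun k => (u * a i * a j) ^ q ^ k) n]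
    refine Finset.sum_congr rfl fun k _ => ?_
    rw [Finset.sum_eq_single k (fun b _ hb => by simp [Matrix.diagonal_apply_ne' _ hb])
      (by simp)]
    rw [Matrix.diagonal_apply_eq]
    ring
  rw [key, Matrix.det_mul, Matrix.det_mul, Matrix.det_transpose, Matrix.det_diagonal,
    ← Fin.prod_univ_eq_prod_range (fun i => u ^ q ^ i) n]
  ring
end

section
/- Let q be a prime power, n a positive integer, u ∈ F_{q^n} nonzero, and k an integer with 1 ≤ k ≤ n. Let Gab_k = {x ↦ Σ_{i=0}^{k−1} p_i x^{q^i} : p_i ∈ F_{q^n}} ⊆ End_{F_q}(F_{q^n}) and let φ denote the Frobenius x ↦ x^q. Then {P* ∘ φ^{k−1} : P ∈ Gab_k} = Gab_k, where P* denotes the adjoint of P with respect to ⟨·,·⟩_u. That is, the adjoint code Gab_k^{⊤,u} is right equivalent to Gab_k itself. -/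
open Finset

section

variable {F K : Type*} [Field F] [Fintype F] [Field K] [Fintype K] [Algebra F K]

local notation "q" => Fintype.card F
local notation "N" => Module.finrank F K

theorem qTr_card_finrank (x : K) : qTr q N x = algebraMap F K (Algebra.trace F K x) := by
  rw [FiniteField.algebraMap_trace_eq_sum_pow, ← Fintype.card_eq_nat_card]
  rfl

theorem pow_card_pow_finrank (x : K) : x ^ q ^ N = x := by
  rw [← Module.card_eq_pow_finrank, FiniteField.pow_card]

theorem pow_card_pow_finrank_add (x : K) (m : ℕ) : x ^ q ^ (N + m) = x ^ q ^ m := by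
  rw [pow_add, pow_mul, pow_card_pow_finrank]

theorem trace_pow_card_pow (x : K) (m : ℕ) :
    Algebra.trace F K (x ^ q ^ m) = Algebra.trace F K x := by
  rw [← Algebra.trace_eq_of_algEquiv (FiniteField.frobeniusAlgEquivOfAlgebraic F K ^ m) x,
    AlgEquiv.coe_pow, FiniteField.coe_frobeniusAlgEquivOfAlgebraic_iterate]

theorem trace_mul_pow_card_pow {i : ℕ} (hi : i ≤ N) (w y : K) :
    Algebra.trace F K (w * y ^ q ^ i) = Algebra.trace F K (w ^ q ^ (N - i) * y) := by
  rw [← trace_pow_card_pow (w ^ _ * y) i, mul_pow, ← pow_mul, ← pow_add,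
    Nat.sub_add_cancel hi, pow_card_pow_finrank]

theorem eq_of_forall_trace_mul_eq {a b : K}
    (h : ∀ y, Algebra.trace F K (a * y) = Algebra.trace F K (b * y)) : a = b := by
  rw [← sub_eq_zero]
  refine (traceForm_nondegenerate F K).1 _ fun y => ?_
  simp [Algebra.traceForm_apply, h]

variable (F) in
noncomputable def adjointCoeff (u : K) (p : ℕ → K) (i : ℕ) : K :=
  u⁻¹ * (u * p i) ^ q ^ (N - i)

theorem trace_mul_linearized_eq_trace_mul_adjoint {u : K} (hu : u ≠ 0) {k : ℕ} (hk : k ≤ N)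
    (p : ℕ → K) (x y : K) :
    Algebra.trace F K (u * x * ∑ i ∈ range k, p i * y ^ q ^ i) =
      Algebra.trace F K (u * (∑ i ∈ range k, adjointCoeff F u p i * x ^ q ^ (N - i)) * y) := by
  simp_rw [mul_sum, sum_mul, map_sum]
  refine sum_congr rfl fun i hi => ?_
  rw [adjointCoeff, ← mul_assoc, ← mul_assoc, mul_inv_cancel_left₀ hu, ← mul_pow,
    ← trace_mul_pow_card_pow ((mem_range.1 hi).le.trans hk)]
  congr 1
  ring

theorem eq_adjoint_of_forall_trace_mul_eq {u : K} (hu : u ≠ 0) {k : ℕ} (hk : k ≤ N)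
    {p : ℕ → K} {x g : K}
    (h : ∀ y, Algebra.trace F K (u * x * ∑ i ∈ range k, p i * y ^ q ^ i) =
      Algebra.trace F K (u * g * y)) :
    g = ∑ i ∈ range k, adjointCoeff F u p i * x ^ q ^ (N - i) := by
  refine mul_left_cancel₀ hu (eq_of_forall_trace_mul_eq (F := F) fun y => ?_)
  rw [← h, trace_mul_linearized_eq_trace_mul_adjoint hu hk]

theorem adjointCoeff_inv {u : K} (hu : u ≠ 0) (c : ℕ → K) {i : ℕ} (hi : i ≤ N) :
    adjointCoeff F u (fun j => u⁻¹ * (u * c j) ^ q ^ j) i = c i := by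
  rw [adjointCoeff, mul_inv_cancel_left₀ hu, ← pow_mul, ← pow_add, Nat.add_sub_cancel' hi,
    pow_card_pow_finrank, inv_mul_cancel_left₀ hu]

theorem sum_comp_pow_card_pow {k : ℕ} (hk : k ≤ N) (c : ℕ → K) (x : K) :
    ∑ i ∈ range k, c i * (x ^ q ^ (k - 1)) ^ q ^ (N - i) =
      ∑ j ∈ range k, c (k - 1 - j) * x ^ q ^ j := by
  rw [← sum_range_reflect]
  refine sum_congr rfl fun j hj => ?_
  have hj := mem_range.1 hj
  rw [← pow_mul, ← pow_add, show k - 1 + (N - (k - 1 - j)) = N + j by omega,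
    pow_card_pow_finrank_add]

end

theorem adjoint_gabidulin_right_equivalent_general
    {F K : Type*} [Field F] [Fintype F] [Field K] [Fintype K] [Algebra F K]
    {n k : ℕ} (hn : Module.finrank F K = n) (hkn : k ≤ n)
    (u : K) (hu : u ≠ 0) :
    {f : K → K | ∃ (p : ℕ → K) (g : K → K),
        (∀ x y : K,
          qTr (Fintype.card F) n
              (u * x * ∑ i ∈ Finset.range k, p i * y ^ Fintype.card F ^ i)
            = qTr (Fintype.card F) n (u * g x * y))
        ∧ ∀ x : K, f x = g (x ^ Fintype.card F ^ (k - 1))}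
      = {f : K → K | ∃ p : ℕ → K, ∀ x : K,
          f x = ∑ i ∈ Finset.range k, p i * x ^ Fintype.card F ^ i} := by
  subst hn
  simp_rw [qTr_card_finrank, (algebraMap F K).injective.eq_iff]
  ext f
  constructor
  · rintro ⟨p, g, hg, hf⟩
    refine ⟨fun j => adjointCoeff F u p (k - 1 - j), fun x => ?_⟩
    rw [hf, eq_adjoint_of_forall_trace_mul_eq hu hkn (hg _), sum_comp_pow_card_pow hkn]
  · rintro ⟨c, hc⟩
    let p i := u⁻¹ * (u * c (k - 1 - i)) ^ Fintype.card F ^ i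
    refine ⟨p, fun x =>
        ∑ i ∈ range k, adjointCoeff F u p i * x ^ Fintype.card F ^ (Module.finrank F K - i),
      trace_mul_linearized_eq_trace_mul_adjoint hu hkn p, fun x => ?_⟩
    dsimp only
    rw [hc, sum_comp_pow_card_pow hkn]
    refine sum_congr rfl fun j hj => ?_
    have hj := mem_range.1 hj
    rw [adjointCoeff_inv hu (fun i => c (k - 1 - i)) (by omega), Nat.sub_sub_self (by omega)]

/-- For `1 ≤ k ≤ n` and `u ≠ 0`, the adjoint code of the
Gabidulin code `Gab_k = {x ↦ ∑_{i=0}^{k-1} pᵢ x^{q^i}}` is right equivalent to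
`Gab_k` itself; more precisely `{P* ∘ φ^{k-1} : P ∈ Gab_k} = Gab_k`, where `φ`
is the Frobenius `x ↦ x^q` and `P*` the adjoint of `P` with respect to
`⟨x,y⟩_u = Tr(uxy)` (characterised by its defining relation, which determines
it uniquely by nondegeneracy of the form). -/
theorem adjoint_gabidulin_right_equivalent
    {F K : Type*} [Field F] [Fintype F] [Field K] [Fintype K] [Algebra F K]
    {n k : ℕ} (hn : Module.finrank F K = n) (hk1 : 1 ≤ k) (hkn : k ≤ n)
    (u : K) (hu : u ≠ 0) :
    {f : K → K | ∃ (p : ℕ → K) (g : K → K),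
        (∀ x y : K,
          qTr (Fintype.card F) n
              (u * x * ∑ i ∈ Finset.range k, p i * y ^ Fintype.card F ^ i)
            = qTr (Fintype.card F) n (u * g x * y))
        ∧ ∀ x : K, f x = g (x ^ Fintype.card F ^ (k - 1))}
      = {f : K → K | ∃ p : ℕ → K, ∀ x : K,
          f x = ∑ i ∈ Finset.range k, p i * x ^ Fintype.card F ^ i} :=
  adjoint_gabidulin_right_equivalent_general hn hkn u hu
end

section
/- Let q be a prime power, n a positive integer, u ∈ F_{q^n} nonzero, and k an integer with n/2 ≤ k ≤ n−1. Suppose f : F_{q^n} → F_{q^n} is of the form f(x) = Σ_{i=1}^{k} p_i x^{q^i} with p_i ∈ F_{q^n}, and f is self-adjoint with respect to ⟨·,·⟩_u, i.e. Tr(u x f(y)) = Tr(u f(x) y) for all x, y. Then p_i = 0 for all i with 1 ≤ i < n−k; that is, f(x) = Σ_{i=n−k}^{k} p_i x^{q^i}. -/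
open Polynomial Finset

lemma qTr_frob {K : Type*} [Field K] [Fintype K] {q n : ℕ}
    (hcard : Fintype.card K = q ^ n) (z : K) : qTr q n (z ^ q) = qTr q n z := by
  unfold qTr
  have h : ∀ i, (z ^ q) ^ q ^ i = z ^ q ^ (i + 1) := fun i => by
    rw [← pow_mul, pow_succ']
  simp_rw [h]
  have hz : z ^ q ^ n = z := by rw [← hcard, FiniteField.pow_card]
  have h2 := Finset.sum_range_succ' (fun i => z ^ q ^ i) n
  rw [Finset.sum_range_succ, hz] at h2
  simp only [pow_zero, pow_one] at h2
  exact add_right_cancel h2.symm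

lemma qTr_frob_pow {K : Type*} [Field K] [Fintype K] {q n : ℕ}
    (hcard : Fintype.card K = q ^ n) (z : K) (j : ℕ) :
    qTr q n (z ^ q ^ j) = qTr q n z := by
  induction j with
  | zero => simp
  | succ j ih => rw [pow_succ, pow_mul, qTr_frob hcard, ih]

section char
variable {K : Type*} [Field K] {p m q : ℕ} [hp : Fact p.Prime] [CharP K p] (hq : q = p ^ m)
include hq

lemma pow_q_eq (i : ℕ) (x : K) : x ^ q ^ i = iterateFrobenius K p (m * i) x := by
  rw [iterateFrobenius_def, pow_mul, hq]

lemma qTr_sub (n : ℕ) (a b : K) : qTr q n (a - b) = qTr q n a - qTr q n b := by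
  unfold qTr
  simp_rw [pow_q_eq hq, map_sub, Finset.sum_sub_distrib]

lemma qTr_sum {ι : Type*} (n : ℕ) (s : Finset ι) (g : ι → K) :
    qTr q n (∑ j ∈ s, g j) = ∑ j ∈ s, qTr q n (g j) := by
  unfold qTr
  simp_rw [pow_q_eq hq, map_sum]
  exact Finset.sum_comm

end char

/-- For `n/2 ≤ k ≤ n-1` and `u ≠ 0`, if
`f(x) = ∑_{i=1}^{k} pᵢ x^{q^i}` is self-adjoint with respect to
`⟨x,y⟩_u = Tr(uxy)`, then `pᵢ = 0` for all `1 ≤ i < n-k`;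
that is, `f(x) = ∑_{i=n-k}^{k} pᵢ x^{q^i}`. -/
theorem selfadjoint_qpoly_coeff_vanish
    {F K : Type*} [Field F] [Fintype F] [Field K] [Fintype K] [Algebra F K]
    {n k : ℕ} (hn : Module.finrank F K = n) (hk : n ≤ 2 * k) (hkn : k < n)
    (u : K) (hu : u ≠ 0) (p : ℕ → K) (f : K → K)
    (hf : ∀ x, f x = ∑ i ∈ Finset.Icc 1 k, p i * x ^ Fintype.card F ^ i)
    (hsa : ∀ x y : K,
      qTr (Fintype.card F) n (u * x * f y) = qTr (Fintype.card F) n (u * f x * y)) :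
    ∀ i, 1 ≤ i → i < n - k → p i = 0 := by
  set q := Fintype.card F with hqdef
  -- characteristic facts
  haveI : CharP F (ringChar F) := ringChar.charP F
  obtain ⟨m, hpprime, hq⟩ := FiniteField.card F (ringChar F)
  haveI : CharP K (ringChar F) := charP_of_injective_algebraMap (algebraMap F K).injective _
  haveI := Fact.mk hpprime
  have hq1 : 1 < q := Fintype.one_lt_card
  have hcard : Fintype.card K = q ^ n := by
    rw [← hn]; exact Module.card_eq_pow_finrank
  have hn1 : 1 ≤ n := lt_of_le_of_lt (Nat.zero_le k) hkn
  -- nondegeneracy of qTr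
  have ndg : ∀ c : K, (∀ y : K, qTr q n (c * y) = 0) → c = 0 := by
    intro c hc
    by_contra hc0
    set T : K[X] := ∑ i ∈ range n, (X : K[X]) ^ q ^ i with hT
    have hT1 : T.coeff 1 = 1 := by
      rw [hT, finset_sum_coeff]
      rw [Finset.sum_eq_single 0]
      · simp
      · intro j hj hne
        rw [coeff_X_pow, if_neg]
        intro h
        have := Nat.one_lt_pow hne hq1
        omega
      · intro h; exact absurd (Finset.mem_range.2 hn1) h
    have hTne : T ≠ 0 := fun h => by simp [h] at hT1
    have hTdeg : T.natDegree < Fintype.card K := by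
      rw [hcard]
      calc T.natDegree ≤ q ^ (n - 1) := by
            apply natDegree_sum_le_of_forall_le
            intro i hi
            rw [natDegree_X_pow]
            exact Nat.pow_le_pow_right (le_of_lt hq1) (by
              have := Finset.mem_range.1 hi; omega)
        _ < q ^ n := Nat.pow_lt_pow_right hq1 (by omega)
    have : ¬ (∀ x : K, T.eval x = 0) := by
      intro hall
      exact hTne (Polynomial.eq_zero_of_natDegree_lt_card_of_eval_eq_zero' T Finset.univ
        (fun x _ => hall x) (by rwa [Finset.card_univ]))
    push_neg at this
    obtain ⟨z, hz⟩ := this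
    have hTz : T.eval z = qTr q n z := by
      simp [hT, qTr, eval_finset_sum]
    apply hz
    rw [hTz, ← mul_inv_cancel_left₀ hc0 z]
    exact hc _
  -- the key polynomial
  set P : K[X] := (∑ i ∈ Icc 1 k, C (u * p i) * X ^ q ^ i)
      - ∑ i ∈ Icc 1 k, C ((u * p i) ^ q ^ (n - i)) * X ^ q ^ (n - i) with hP
  have hPeval : ∀ x : K, P.eval x = 0 := by
    intro x
    apply ndg
    intro y
    have e1 : P.eval x = (∑ i ∈ Icc 1 k, u * p i * x ^ q ^ i)
        - ∑ i ∈ Icc 1 k, (u * p i) ^ q ^ (n - i) * x ^ q ^ (n - i) := by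
      simp [hP, eval_finset_sum]
    rw [e1, sub_mul, qTr_sub hq, Finset.sum_mul, Finset.sum_mul]
    have hA : qTr q n (∑ i ∈ Icc 1 k, u * p i * x ^ q ^ i * y) = qTr q n (u * f x * y) := by
      congr 1
      rw [hf, Finset.mul_sum, Finset.sum_mul]
      exact Finset.sum_congr rfl fun i _ => by ring
    have hB : qTr q n (∑ i ∈ Icc 1 k, (u * p i) ^ q ^ (n - i) * x ^ q ^ (n - i) * y)
        = qTr q n (u * x * f y) := by
      rw [qTr_sum hq]
      have h2 : qTr q n (u * x * f y) = ∑ i ∈ Icc 1 k, qTr q n (u * p i * x * y ^ q ^ i) := by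
        rw [hf, Finset.mul_sum, qTr_sum hq]
        exact Finset.sum_congr rfl fun i _ => congrArg _ (by ring)
      rw [h2]
      refine Finset.sum_congr rfl fun i hi => ?_
      have hin : i ≤ n := le_of_lt (lt_of_le_of_lt (Finset.mem_Icc.1 hi).2 hkn)
      have h1 := qTr_frob_pow hcard ((u * p i) ^ q ^ (n - i) * x ^ q ^ (n - i) * y) i
      rw [← h1]
      congr 1
      rw [mul_pow, mul_pow, ← pow_mul, ← pow_mul, ← pow_add,
        Nat.sub_add_cancel hin, ← hcard, FiniteField.pow_card, FiniteField.pow_card]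
    rw [hA, hB, ← hsa x y, sub_self]
  have hP0 : P = 0 := by
    apply Polynomial.eq_zero_of_natDegree_lt_card_of_eval_eq_zero' P Finset.univ
      (fun x _ => hPeval x)
    rw [Finset.card_univ, hcard]
    calc P.natDegree ≤ q ^ (n - 1) := by
          rw [hP]
          apply le_trans (natDegree_sub_le _ _)
          apply max_le <;>
          · apply natDegree_sum_le_of_forall_le
            intro i hi
            apply le_trans (natDegree_C_mul_X_pow_le _ _)
            apply Nat.pow_le_pow_right (le_of_lt hq1)
            have := Finset.mem_Icc.1 hi
            omega
      _ < q ^ n := Nat.pow_lt_pow_right hq1 (by omega)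
  -- extract coefficients
  intro i hi1 hi2
  have hik : i ∈ Icc 1 k := Finset.mem_Icc.2 ⟨hi1, by omega⟩
  have hcoeff := congrArg (fun Q : K[X] => Q.coeff (q ^ i)) hP0
  simp only [hP, coeff_sub, finset_sum_coeff, coeff_C_mul, coeff_X_pow, coeff_zero,
    mul_ite, mul_one, mul_zero] at hcoeff
  have hs1 : (∑ j ∈ Icc 1 k, if q ^ i = q ^ j then u * p j else 0) = u * p i := by
    rw [Finset.sum_eq_single i]
    · simp
    · intro j hj hne
      rw [if_neg]
      intro h
      exact hne (Nat.pow_right_injective hq1 h).symm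
    · intro h; exact absurd hik h
  have hs2 : (∑ j ∈ Icc 1 k, if q ^ i = q ^ (n - j) then (u * p j) ^ q ^ (n - j) else 0)
      = 0 := by
    apply Finset.sum_eq_zero
    intro j hj
    rw [if_neg]
    intro h
    have := Nat.pow_right_injective hq1 h
    have := Finset.mem_Icc.1 hj
    omega
  rw [hs1, hs2, sub_zero] at hcoeff
  exact (mul_eq_zero.mp hcoeff).resolve_left hu
end
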